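/- arXiv:1905.11434 — 2 statements merged into one kernel-verified Lean document; each statement's English description precedes it below -/
import Mathlib

section
/- Assume positive monotonicity: M1(ω) ≥ M0(ω) for every ω ∈ Ω. If P(Y=1, M=0 | X=1) > P(Y=1, M=0 | X=0), then the set of ω ∈ Ω satisfying: M1(ω)=M0(ω)=0, Y1(ω)−Y0(ω)=1, Y_{1,M1(ω)}(ω) − Y_{0,M0(ω)}(ω) = 1, Y_{1,M1(ω)}(ω) − Y_{0,M1(ω)}(ω) = 1, Y_{1,M0(ω)}(ω) − Y_{0,M0(ω)}(ω) = 1, Y_{1,M1(ω)}(ω) − Y_{1,M0(ω)}(ω) = 0 and Y_{0,M1(ω)}(ω) − Y_{0,M0(ω)}(ω) = 0, has positive μ-measure. That is, the total effect, total direct effect, pure direct effect, and principal stratum direct effect (with M1(ω)=M0(ω)=0) all equal 1 for such ω, and the total indirect and pure indirect effects are both 0. -/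
/-!
Randomization turns the observed conditional probabilities into marginal ones:
`P(Y = 1, M = 0 | X = x) = μ(Y_x = 1, M_x = 0)`. The hypothesis thus says that the event
`{Y1 = 1, M1 = 0}` is strictly more likely than `{Y0 = 1, M0 = 0}`, so their difference has
positive measure. Under monotonicity every `ω` in that difference has `M1 = M0 = 0`, `Y1 = 1`
and `Y0 = 0`, and composition then forces `Y_{1,0} = 1` and `Y_{0,0} = 0`, which gives all the
listed effects.
-/

open MeasureTheory ProbabilityTheory

/-- Conditional probability `P(A | B) = mu(A ∩ B) / mu(B)` as a real number. -/
noncomputable def condP {Ω : Type*} [MeasurableSpace Ω] (μ : Measure Ω)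
    (A B : Set Ω) : ℝ :=
  (μ (A ∩ B)).toReal / (μ B).toReal

lemma condP_eq_measure_preimage_of_indepFun {Ω α β : Type*} [MeasurableSpace Ω]
    [MeasurableSpace α] [MeasurableSingletonClass α] [MeasurableSpace β]
    {μ : Measure Ω} [IsFiniteMeasure μ] {X : Ω → α} {V : Ω → β} (hXV : IndepFun X V μ)
    {x : α} (hx : μ {ω | X ω = x} ≠ 0) {A : Set Ω} {S : Set β} (hS : MeasurableSet S)
    (hAS : ∀ ω, X ω = x → (ω ∈ A ↔ V ω ∈ S)) :
    condP μ A {ω | X ω = x} = (μ (V ⁻¹' S)).toReal := by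
  have hinter : A ∩ {ω | X ω = x} = X ⁻¹' {x} ∩ V ⁻¹' S := by
    ext ω
    simp only [Set.mem_inter_iff, Set.mem_ofPred_eq, Set.mem_preimage, Set.mem_singleton_iff]
    exact ⟨fun ⟨hA, hX⟩ => ⟨hX, (hAS ω hX).mp hA⟩, fun ⟨hX, hV⟩ => ⟨(hAS ω hX).mpr hV, hX⟩⟩
  have hx' : (μ (X ⁻¹' {x})).toReal ≠ 0 := ENNReal.toReal_ne_zero.mpr ⟨hx, measure_ne_top _ _⟩
  rw [condP, hinter, hXV.measure_inter_preimage_eq_mul _ _ (measurableSet_singleton x) hS,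
    ENNReal.toReal_mul]
  exact mul_div_cancel_left₀ _ hx'

lemma measure_compl_ne_zero_of_lt_one {Ω : Type*} [MeasurableSpace Ω] {μ : Measure Ω}
    [IsProbabilityMeasure μ] {s : Set Ω} (hs : μ s < 1) : μ sᶜ ≠ 0 := by
  intro h
  have hle := measure_univ_le_add_compl (μ := μ) s
  rw [measure_univ, h, add_zero] at hle
  exact hs.not_ge hle

theorem statement6_general
    {Ω : Type*} [MeasurableSpace Ω] (μ : Measure Ω) [IsProbabilityMeasure μ]
    (Y1 Y0 M1 M0 X Y M : Ω → ℕ)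
    (hY0bin : ∀ ω, Y0 ω ≤ 1)
    (hXbin : ∀ ω, X ω ≤ 1)
    (hXpos : 0 < μ {ω | X ω = 1}) (hXlt : μ {ω | X ω = 1} < 1)
    (hindep : IndepFun X (fun ω => (Y1 ω, Y0 ω, M1 ω, M0 ω)) μ)
    (hYcons1 : ∀ ω, X ω = 1 → Y ω = Y1 ω)
    (hYcons0 : ∀ ω, X ω = 0 → Y ω = Y0 ω)
    (hMcons1 : ∀ ω, X ω = 1 → M ω = M1 ω)
    (hMcons0 : ∀ ω, X ω = 0 → M ω = M0 ω)
    (hmono : ∀ ω, M0 ω ≤ M1 ω)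
    (Ynest : ℕ → ℕ → Ω → ℕ)
    (hcomp1 : ∀ ω, Ynest 1 (M1 ω) ω = Y1 ω)
    (hcomp0 : ∀ ω, Ynest 0 (M0 ω) ω = Y0 ω)
    (hemp : condP μ {ω | Y ω = 1 ∧ M ω = 0} {ω | X ω = 1}
        > condP μ {ω | Y ω = 1 ∧ M ω = 0} {ω | X ω = 0}) :
    0 < μ {ω | M1 ω = 0 ∧ M0 ω = 0 ∧ (Y1 ω : ℤ) - (Y0 ω : ℤ) = 1 ∧
      (Ynest 1 (M1 ω) ω : ℤ) - (Ynest 0 (M0 ω) ω : ℤ) = 1 ∧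
      (Ynest 1 (M1 ω) ω : ℤ) - (Ynest 0 (M1 ω) ω : ℤ) = 1 ∧
      (Ynest 1 (M0 ω) ω : ℤ) - (Ynest 0 (M0 ω) ω : ℤ) = 1 ∧
      (Ynest 1 (M1 ω) ω : ℤ) - (Ynest 1 (M0 ω) ω : ℤ) = 0 ∧
      (Ynest 0 (M1 ω) ω : ℤ) - (Ynest 0 (M0 ω) ω : ℤ) = 0} := by
  have hX0 : μ {ω | X ω = 0} ≠ 0 := by
    convert measure_compl_ne_zero_of_lt_one hXlt using 2
    ext ω
    have := hXbin ω
    simp only [Set.mem_ofPred_eq, Set.mem_compl_iff]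
    omega
  have hP1 : condP μ {ω | Y ω = 1 ∧ M ω = 0} {ω | X ω = 1} =
      (μ {ω | Y1 ω = 1 ∧ M1 ω = 0}).toReal :=
    condP_eq_measure_preimage_of_indepFun hindep hXpos.ne' (S := {p | p.1 = 1 ∧ p.2.2.1 = 0})
      (Set.to_countable _).measurableSet fun ω hx => by simp [hYcons1 ω hx, hMcons1 ω hx]
  have hP0 : condP μ {ω | Y ω = 1 ∧ M ω = 0} {ω | X ω = 0} =
      (μ {ω | Y0 ω = 1 ∧ M0 ω = 0}).toReal :=
    condP_eq_measure_preimage_of_indepFun hindep hX0 (S := {p | p.2.1 = 1 ∧ p.2.2.2 = 0})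
      (Set.to_countable _).measurableSet fun ω hx => by simp [hYcons0 ω hx, hMcons0 ω hx]
  rw [hP1, hP0, gt_iff_lt, ENNReal.toReal_lt_toReal (measure_ne_top _ _) (measure_ne_top _ _)]
    at hemp
  refine (tsub_pos_of_lt hemp).trans_le (le_measure_sdiff.trans (measure_mono ?_))
  rintro ω ⟨⟨hy1, hm1⟩, hnot⟩
  have hm0 : M0 ω = 0 := by have := hmono ω; omega
  have hy0 : Y0 ω = 0 := by
    have := hY0bin ω
    simp only [Set.mem_ofPred_eq, hm0, and_true] at hnot
    omega
  have h10 : Ynest 1 0 ω = 1 := by simpa [hm1, hy1] using hcomp1 ω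
  have h00 : Ynest 0 0 ω = 0 := by simpa [hm0, hy0] using hcomp0 ω
  simp only [Set.mem_ofPred_eq, hm1, hm0, hy1, hy0, h10, h00]
  norm_num

theorem statement6
    {Ω : Type*} [MeasurableSpace Ω] (μ : Measure Ω) [IsProbabilityMeasure μ]
    (Y1 Y0 M1 M0 X Y M : Ω → ℕ)
    (hY1meas : Measurable Y1) (hY0meas : Measurable Y0)
    (hM1meas : Measurable M1) (hM0meas : Measurable M0)
    (hXmeas : Measurable X)
    (hY1bin : ∀ ω, Y1 ω ≤ 1) (hY0bin : ∀ ω, Y0 ω ≤ 1)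
    (hM1bin : ∀ ω, M1 ω ≤ 1) (hM0bin : ∀ ω, M0 ω ≤ 1)
    (hXbin : ∀ ω, X ω ≤ 1)
    (hXpos : 0 < μ {ω | X ω = 1}) (hXlt : μ {ω | X ω = 1} < 1)
    (hindep : IndepFun X (fun ω => (Y1 ω, Y0 ω, M1 ω, M0 ω)) μ)
    (hYcons1 : ∀ ω, X ω = 1 → Y ω = Y1 ω)
    (hYcons0 : ∀ ω, X ω = 0 → Y ω = Y0 ω)
    (hMcons1 : ∀ ω, X ω = 1 → M ω = M1 ω)
    (hMcons0 : ∀ ω, X ω = 0 → M ω = M0 ω)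
    (hmono : ∀ ω, M0 ω ≤ M1 ω)
    (Ynest : ℕ → ℕ → Ω → ℕ)
    (hYnestmeas : ∀ x m', Measurable (Ynest x m'))
    (hYnestbin : ∀ x m' ω, Ynest x m' ω ≤ 1)
    (hcomp1 : ∀ ω, Ynest 1 (M1 ω) ω = Y1 ω)
    (hcomp0 : ∀ ω, Ynest 0 (M0 ω) ω = Y0 ω)
    (hemp : condP μ {ω | Y ω = 1 ∧ M ω = 0} {ω | X ω = 1}
        > condP μ {ω | Y ω = 1 ∧ M ω = 0} {ω | X ω = 0}) :
    0 < μ {ω | M1 ω = 0 ∧ M0 ω = 0 ∧ (Y1 ω : ℤ) - (Y0 ω : ℤ) = 1 ∧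
      (Ynest 1 (M1 ω) ω : ℤ) - (Ynest 0 (M0 ω) ω : ℤ) = 1 ∧
      (Ynest 1 (M1 ω) ω : ℤ) - (Ynest 0 (M1 ω) ω : ℤ) = 1 ∧
      (Ynest 1 (M0 ω) ω : ℤ) - (Ynest 0 (M0 ω) ω : ℤ) = 1 ∧
      (Ynest 1 (M1 ω) ω : ℤ) - (Ynest 1 (M0 ω) ω : ℤ) = 0 ∧
      (Ynest 0 (M1 ω) ω : ℤ) - (Ynest 0 (M0 ω) ω : ℤ) = 0} :=
  statement6_general μ Y1 Y0 M1 M0 X Y M hY0bin hXbin hXpos hXlt hindep hYcons1 hYcons0 hMcons1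
    hMcons0 hmono Ynest hcomp1 hcomp0 hemp
end

section
/- If P(Y ∈ y_a, M ∈ m_a | X=1) + P(Y ∉ y_a, M ∈ m_a | X=0) > 1, then μ({M1 ∈ m_a} ∩ {M0 ∈ m_a}) > 0 and [P(Y ∈ y_a, M ∈ m_a | X=1) + P(Y ∉ y_a, M ∈ m_a | X=0) − 1] / [P(M ∈ m_a | X=1) − P(M ∉ m_a | X=0)] ≤ [μ(Y1 ∈ y_a, Y0 ∉ y_a, M1 ∈ m_a, M0 ∈ m_a) − μ(Y1 ∉ y_a, Y0 ∈ y_a, M1 ∈ m_a, M0 ∈ m_a)] / μ({M1 ∈ m_a} ∩ {M0 ∈ m_a}); moreover the right-hand side equals P(Y1 ∈ y_a, Y0 ∉ y_a | M1 ∈ m_a, M0 ∈ m_a) − P(Y1 ∉ y_a, Y0 ∈ y_a | M1 ∈ m_a, M0 ∈ m_a), where P(A | B) := μ(A ∩ B)/μ(B). -/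
/-!
Randomization and consistency identify the four observed conditional probabilities with the
marginals `μ(Y1 ∈ ya, M1 ∈ ma)`, `μ(Y0 ∉ ya, M0 ∈ ma)`, `μ(M1 ∈ ma)` and `μ(M0 ∉ ma)`.
The events `{Y1 ∈ ya, M1 ∈ ma} ∪ {Y0 ∉ ya, M0 ∈ ma}`, `{Y1 ∉ ya, Y0 ∈ ya, M1 ∈ ma, M0 ∈ ma}` and
`{M1 ∉ ma, M0 ∉ ma}` are disjoint, and the first two events intersect exactly in
`{Y1 ∈ ya, Y0 ∉ ya, M1 ∈ ma, M0 ∈ ma}`. Hence the numerator is at most `a - b - n`, where `a`, `b`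
are the two probabilities in the numerator of the right-hand side and `n = μ(M1 ∉ ma, M0 ∉ ma)`,
while the denominator equals `c - n` with `c = μ(M1 ∈ ma, M0 ∈ ma)`. Finally
`(a - b - n) / (c - n) ≤ (a - b) / c` because `a - b ≤ c`.
-/

open MeasureTheory ProbabilityTheory

section

variable {Ω : Type*} [MeasurableSpace Ω] {μ : Measure Ω}

theorem measure_ne_zero_of_union_eq_univ [IsProbabilityMeasure μ] {s t : Set Ω}
    (hst : s ∪ t = Set.univ) (ht : μ t < 1) : μ s ≠ 0 := by
  intro hs
  have := measure_union_le (μ := μ) s t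
  rw [hst, measure_univ, hs, zero_add] at this
  exact ht.not_ge this

theorem condP_eq_measureReal_of_indepFun [IsFiniteMeasure μ] {α β : Type*}
    [MeasurableSpace α] [MeasurableSpace β] {X : Ω → α} {T : Ω → β} (hXT : IndepFun X T μ)
    {s : Set α} (hs : MeasurableSet s) (hXs : μ (X ⁻¹' s) ≠ 0)
    {B : Set β} (hB : MeasurableSet B) {A : Set Ω} (hA : ∀ ω, X ω ∈ s → (ω ∈ A ↔ T ω ∈ B)) :
    condP μ A (X ⁻¹' s) = μ.real (T ⁻¹' B) := by
  have hAX : A ∩ X ⁻¹' s = X ⁻¹' s ∩ T ⁻¹' B := by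
    ext ω
    by_cases hω : X ω ∈ s
    · simp [hω, hA ω hω]
    · simp [hω]
  rw [condP, hAX, hXT.measure_inter_preimage_eq_mul s B hs hB, ENNReal.toReal_mul,
    mul_div_cancel_left₀ _ (ENNReal.toReal_ne_zero.2 ⟨hXs, measure_ne_top μ _⟩)]
  rfl

theorem measureReal_add_add_add_le_one_add_inter [IsProbabilityMeasure μ] {S S' B N : Set Ω}
    (hS' : MeasurableSet S') (hB : MeasurableSet B) (hN : MeasurableSet N)
    (hSB : Disjoint (S ∪ S') B) (hSN : Disjoint (S ∪ S') N) (hBN : Disjoint B N) :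
    μ.real S + μ.real S' + μ.real B + μ.real N ≤ 1 + μ.real (S ∩ S') := by
  have hunion : μ.real (S ∪ S' ∪ B ∪ N) = μ.real (S ∪ S') + μ.real B + μ.real N := by
    rw [measureReal_union (hSN.union_left hBN) hN, measureReal_union hSB hB]
  linarith [measureReal_union_add_inter (μ := μ) (s := S) hS',
    measureReal_le_one (μ := μ) (s := S ∪ S' ∪ B ∪ N)]

theorem measureReal_sub_measureReal_compl [IsFiniteMeasure μ] {s t : Set Ω}
    (hs : MeasurableSet s) (ht : MeasurableSet t) :
    μ.real s - μ.real tᶜ = μ.real (s ∩ t) - μ.real (sᶜ ∩ tᶜ) := by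
  have hs_split := measureReal_inter_add_sdiff (μ := μ) (s := s) ht
  have ht_split := measureReal_inter_add_sdiff (μ := μ) (s := tᶜ) hs
  rw [Set.sdiff_eq] at hs_split ht_split
  rw [Set.inter_comm tᶜ s, Set.inter_comm tᶜ sᶜ] at ht_split
  linarith

theorem frechet_bound_potential_outcomes [IsProbabilityMeasure μ] {α β : Type*}
    [MeasurableSpace α] [MeasurableSpace β] {Y1 Y0 : Ω → α} {M1 M0 : Ω → β}
    (hY1 : Measurable Y1) (hY0 : Measurable Y0) (hM1 : Measurable M1) (hM0 : Measurable M0)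
    {ya : Set α} {ma : Set β} (hya : MeasurableSet ya) (hma : MeasurableSet ma) :
    μ.real {ω | Y1 ω ∈ ya ∧ M1 ω ∈ ma} + μ.real {ω | Y0 ω ∉ ya ∧ M0 ω ∈ ma} - 1
      ≤ μ.real {ω | Y1 ω ∈ ya ∧ Y0 ω ∉ ya ∧ M1 ω ∈ ma ∧ M0 ω ∈ ma}
        - μ.real {ω | Y1 ω ∉ ya ∧ Y0 ω ∈ ya ∧ M1 ω ∈ ma ∧ M0 ω ∈ ma}
        - μ.real ({ω | M1 ω ∈ ma}ᶜ ∩ {ω | M0 ω ∈ ma}ᶜ) := by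
  have hinter : {ω | Y1 ω ∈ ya ∧ M1 ω ∈ ma} ∩ {ω | Y0 ω ∉ ya ∧ M0 ω ∈ ma}
      = {ω | Y1 ω ∈ ya ∧ Y0 ω ∉ ya ∧ M1 ω ∈ ma ∧ M0 ω ∈ ma} := by
    ext ω
    simp only [Set.mem_inter_iff, Set.mem_ofPred_eq]
    tauto
  have hbound := measureReal_add_add_add_le_one_add_inter (μ := μ)
    (S := {ω | Y1 ω ∈ ya ∧ M1 ω ∈ ma}) (S' := {ω | Y0 ω ∉ ya ∧ M0 ω ∈ ma})
    (B := {ω | Y1 ω ∉ ya ∧ Y0 ω ∈ ya ∧ M1 ω ∈ ma ∧ M0 ω ∈ ma})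
    (N := {ω | M1 ω ∈ ma}ᶜ ∩ {ω | M0 ω ∈ ma}ᶜ) (by measurability) (by measurability)
    (by measurability) (Set.disjoint_left.2 fun ω h h' => by simp at h h'; tauto)
    (Set.disjoint_left.2 fun ω h h' => by simp at h h'; tauto)
    (Set.disjoint_left.2 fun ω h h' => by simp at h h'; tauto)
  rw [hinter] at hbound
  linarith

theorem div_sub_le_div_of_le_sub {s a c n : ℝ} (hs : 0 < s) (hsa : s ≤ a - n) (hn : 0 ≤ n)
    (hac : a ≤ c) : s / (c - n) ≤ a / c := by
  have hcn : 0 < c - n := by linarith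
  rw [div_le_div_iff₀ hcn (by linarith)]
  nlinarith

end

theorem statement16_general
    {Ω : Type*} [MeasurableSpace Ω] (μ : Measure Ω) [IsProbabilityMeasure μ]
    {ny nm : ℕ}
    (Y1 Y0 Y : Ω → (Fin ny → ℝ)) (M1 M0 M : Ω → (Fin nm → ℝ)) (X : Ω → ℕ)
    (hY1meas : Measurable Y1) (hY0meas : Measurable Y0)
    (hM1meas : Measurable M1) (hM0meas : Measurable M0)
    (hXbin : ∀ ω, X ω ≤ 1)
    (hXpos : 0 < μ {ω | X ω = 1}) (hXlt : μ {ω | X ω = 1} < 1)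
    (hindep : IndepFun X (fun ω => (Y1 ω, Y0 ω, M1 ω, M0 ω)) μ)
    (hYcons1 : ∀ ω, X ω = 1 → Y ω = Y1 ω)
    (hYcons0 : ∀ ω, X ω = 0 → Y ω = Y0 ω)
    (hMcons1 : ∀ ω, X ω = 1 → M ω = M1 ω)
    (hMcons0 : ∀ ω, X ω = 0 → M ω = M0 ω)
    (ya : Set (Fin ny → ℝ)) (ma : Set (Fin nm → ℝ))
    (hya : MeasurableSet ya) (hma : MeasurableSet ma)
    (hemp : condP μ {ω | Y ω ∈ ya ∧ M ω ∈ ma} {ω | X ω = 1}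
        + condP μ {ω | Y ω ∉ ya ∧ M ω ∈ ma} {ω | X ω = 0} > 1) :
    0 < μ ({ω | M1 ω ∈ ma} ∩ {ω | M0 ω ∈ ma}) ∧
    (condP μ {ω | Y ω ∈ ya ∧ M ω ∈ ma} {ω | X ω = 1}
        + condP μ {ω | Y ω ∉ ya ∧ M ω ∈ ma} {ω | X ω = 0} - 1)
      / (condP μ {ω | M ω ∈ ma} {ω | X ω = 1}
        - condP μ {ω | M ω ∉ ma} {ω | X ω = 0})
      ≤ ((μ {ω | Y1 ω ∈ ya ∧ Y0 ω ∉ ya ∧ M1 ω ∈ ma ∧ M0 ω ∈ ma}).toReal - (μ {ω | Y1 ω ∉ ya ∧ Y0 ω ∈ ya ∧ M1 ω ∈ ma ∧ M0 ω ∈ ma}).toReal)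
        / (μ ({ω | M1 ω ∈ ma} ∩ {ω | M0 ω ∈ ma})).toReal ∧
    ((μ {ω | Y1 ω ∈ ya ∧ Y0 ω ∉ ya ∧ M1 ω ∈ ma ∧ M0 ω ∈ ma}).toReal - (μ {ω | Y1 ω ∉ ya ∧ Y0 ω ∈ ya ∧ M1 ω ∈ ma ∧ M0 ω ∈ ma}).toReal)
      / (μ ({ω | M1 ω ∈ ma} ∩ {ω | M0 ω ∈ ma})).toReal
      = condP μ {ω | Y1 ω ∈ ya ∧ Y0 ω ∉ ya} {ω | M1 ω ∈ ma ∧ M0 ω ∈ ma}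
        - condP μ {ω | Y1 ω ∉ ya ∧ Y0 ω ∈ ya} {ω | M1 ω ∈ ma ∧ M0 ω ∈ ma} := by
  have hX0 : μ {ω | X ω = 0} ≠ 0 :=
    measure_ne_zero_of_union_eq_univ (Set.ext fun ω => by have := hXbin ω; simp; omega) hXlt
  have hS1 : condP μ {ω | Y ω ∈ ya ∧ M ω ∈ ma} {ω | X ω = 1}
      = μ.real {ω | Y1 ω ∈ ya ∧ M1 ω ∈ ma} :=
    condP_eq_measureReal_of_indepFun hindep (measurableSet_singleton 1) hXpos.ne'
      (B := {t | t.1 ∈ ya ∧ t.2.2.1 ∈ ma}) (by measurability)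
      fun ω hω => by simp [hYcons1 ω hω, hMcons1 ω hω]
  have hS0 : condP μ {ω | Y ω ∉ ya ∧ M ω ∈ ma} {ω | X ω = 0}
      = μ.real {ω | Y0 ω ∉ ya ∧ M0 ω ∈ ma} :=
    condP_eq_measureReal_of_indepFun hindep (measurableSet_singleton 0) hX0
      (B := {t | t.2.1 ∉ ya ∧ t.2.2.2 ∈ ma}) (by measurability)
      fun ω hω => by simp [hYcons0 ω hω, hMcons0 ω hω]
  have hM1 : condP μ {ω | M ω ∈ ma} {ω | X ω = 1} = μ.real {ω | M1 ω ∈ ma} :=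
    condP_eq_measureReal_of_indepFun hindep (measurableSet_singleton 1) hXpos.ne'
      (B := {t | t.2.2.1 ∈ ma}) (by measurability) fun ω hω => by simp [hMcons1 ω hω]
  have hM0 : condP μ {ω | M ω ∉ ma} {ω | X ω = 0} = μ.real {ω | M0 ω ∈ ma}ᶜ :=
    condP_eq_measureReal_of_indepFun hindep (measurableSet_singleton 0) hX0
      (B := {t | t.2.2.2 ∉ ma}) (by measurability) fun ω hω => by simp [hMcons0 ω hω]
  have hbound := frechet_bound_potential_outcomes (μ := μ) hY1meas hY0meas hM1meas hM0meas hya hma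
  have hstratum_le : μ.real {ω | Y1 ω ∈ ya ∧ Y0 ω ∉ ya ∧ M1 ω ∈ ma ∧ M0 ω ∈ ma}
      ≤ μ.real ({ω | M1 ω ∈ ma} ∩ {ω | M0 ω ∈ ma}) :=
    measureReal_mono fun ω h => ⟨h.2.2.1, h.2.2.2⟩
  have hN_nonneg := measureReal_nonneg (μ := μ) (s := {ω | M1 ω ∈ ma}ᶜ ∩ {ω | M0 ω ∈ ma}ᶜ)
  have hB_nonneg := measureReal_nonneg (μ := μ)
    (s := {ω | Y1 ω ∉ ya ∧ Y0 ω ∈ ya ∧ M1 ω ∈ ma ∧ M0 ω ∈ ma})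
  simp only [← measureReal_def]
  rw [hS1, hS0] at hemp ⊢
  rw [hM1, hM0, measureReal_sub_measureReal_compl (μ := μ) (s := {ω | M1 ω ∈ ma})
    (t := {ω | M0 ω ∈ ma}) (hM1meas hma) (hM0meas hma)]
  refine ⟨(ENNReal.toReal_pos_iff.1 (show 0 < μ.real _ by linarith)).1,
    div_sub_le_div_of_le_sub (by linarith) (by linarith) hN_nonneg (by linarith), ?_⟩
  rw [condP, condP, ← sub_div]
  congr 3 <;> ext ω <;> simp [and_assoc]

theorem statement16
    {Ω : Type*} [MeasurableSpace Ω] (μ : Measure Ω) [IsProbabilityMeasure μ]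
    {ny nm : ℕ} (hny : 0 < ny) (hnm : 0 < nm)
    (Y1 Y0 Y : Ω → (Fin ny → ℝ)) (M1 M0 M : Ω → (Fin nm → ℝ)) (X : Ω → ℕ)
    (hY1meas : Measurable Y1) (hY0meas : Measurable Y0)
    (hM1meas : Measurable M1) (hM0meas : Measurable M0)
    (hXmeas : Measurable X) (hXbin : ∀ ω, X ω ≤ 1)
    (hXpos : 0 < μ {ω | X ω = 1}) (hXlt : μ {ω | X ω = 1} < 1)
    (hindep : IndepFun X (fun ω => (Y1 ω, Y0 ω, M1 ω, M0 ω)) μ)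
    (hYcons1 : ∀ ω, X ω = 1 → Y ω = Y1 ω)
    (hYcons0 : ∀ ω, X ω = 0 → Y ω = Y0 ω)
    (hMcons1 : ∀ ω, X ω = 1 → M ω = M1 ω)
    (hMcons0 : ∀ ω, X ω = 0 → M ω = M0 ω)
    (ya : Set (Fin ny → ℝ)) (ma : Set (Fin nm → ℝ))
    (hya : MeasurableSet ya) (hma : MeasurableSet ma)
    (hemp : condP μ {ω | Y ω ∈ ya ∧ M ω ∈ ma} {ω | X ω = 1}
        + condP μ {ω | Y ω ∉ ya ∧ M ω ∈ ma} {ω | X ω = 0} > 1) :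
    0 < μ ({ω | M1 ω ∈ ma} ∩ {ω | M0 ω ∈ ma}) ∧
    (condP μ {ω | Y ω ∈ ya ∧ M ω ∈ ma} {ω | X ω = 1}
        + condP μ {ω | Y ω ∉ ya ∧ M ω ∈ ma} {ω | X ω = 0} - 1)
      / (condP μ {ω | M ω ∈ ma} {ω | X ω = 1}
        - condP μ {ω | M ω ∉ ma} {ω | X ω = 0})
      ≤ ((μ {ω | Y1 ω ∈ ya ∧ Y0 ω ∉ ya ∧ M1 ω ∈ ma ∧ M0 ω ∈ ma}).toReal - (μ {ω | Y1 ω ∉ ya ∧ Y0 ω ∈ ya ∧ M1 ω ∈ ma ∧ M0 ω ∈ ma}).toReal)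
        / (μ ({ω | M1 ω ∈ ma} ∩ {ω | M0 ω ∈ ma})).toReal ∧
    ((μ {ω | Y1 ω ∈ ya ∧ Y0 ω ∉ ya ∧ M1 ω ∈ ma ∧ M0 ω ∈ ma}).toReal - (μ {ω | Y1 ω ∉ ya ∧ Y0 ω ∈ ya ∧ M1 ω ∈ ma ∧ M0 ω ∈ ma}).toReal)
      / (μ ({ω | M1 ω ∈ ma} ∩ {ω | M0 ω ∈ ma})).toReal
      = condP μ {ω | Y1 ω ∈ ya ∧ Y0 ω ∉ ya} {ω | M1 ω ∈ ma ∧ M0 ω ∈ ma}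
        - condP μ {ω | Y1 ω ∉ ya ∧ Y0 ω ∈ ya} {ω | M1 ω ∈ ma ∧ M0 ω ∈ ma} :=
  statement16_general μ Y1 Y0 Y M1 M0 M X hY1meas hY0meas hM1meas hM0meas hXbin hXpos hXlt hindep
    hYcons1 hYcons0 hMcons1 hMcons0 ya ma hya hma hemp
end
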